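/- The group T with presentation ⟨a, b | a·b·a = b·a·b, (a·b)⁶ = 1⟩ has abelianization isomorphic to Z/12Z, generated by the image of a. -/

import Mathlib

/-- Relations of the presentation `⟨a, b | aba = bab, (ab)⁶ = 1⟩`. -/
def twistRels3 : Set (FreeGroup (Fin 2)) :=
  { FreeGroup.of 0 * FreeGroup.of 1 * FreeGroup.of 0 *
      (FreeGroup.of 1 * FreeGroup.of 0 * FreeGroup.of 1)⁻¹,
    (FreeGroup.of 0 * FreeGroup.of 1) ^ 6 }

/-!
In the abelianization the braid relation forces `a = b`, so it is cyclic, generated by `a`, and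
`(ab)⁶ = 1` becomes `a¹² = 1`. The exponent-sum map modulo 12 kills both relators and sends `a`
to a generator of `ℤ/12`, so `a` has order exactly 12.
-/

theorem eq_of_mul_mul_eq_mul_mul {G : Type*} [CommGroup G] {x y : G}
    (h : x * y * x = y * x * y) : x = y :=
  mul_right_cancel (b := x * y) (by rw [mul_comm x (x * y), ← mul_assoc, h, mul_assoc])

theorem PresentedGroup.abelianization_eq_top_of_of_mem {α : Type*} {rels : Set (FreeGroup α)}
    (H : Subgroup (Abelianization (PresentedGroup rels)))
    (h : ∀ i, Abelianization.of (PresentedGroup.of i) ∈ H) : H = ⊤ :=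
  eq_top_iff.mpr fun x _ => QuotientGroup.induction_on x
    (PresentedGroup.generated_by rels (H.comap Abelianization.of) h)

namespace TwistN3

local notation "T" => PresentedGroup twistRels3

theorem braid : (PresentedGroup.of 0 : T) * .of 1 * .of 0 = .of 1 * .of 0 * .of 1 :=
  PresentedGroup.mk_eq_mk_of_mul_inv_mem (Or.inl rfl)

theorem mul_pow_six : ((PresentedGroup.of 0 : T) * .of 1) ^ 6 = 1 :=
  PresentedGroup.one_of_mem (Or.inr rfl)

noncomputable abbrev a : Abelianization T := Abelianization.of (PresentedGroup.of 0)
noncomputable abbrev b : Abelianization T := Abelianization.of (PresentedGroup.of 1)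

theorem a_eq_b : a = b :=
  eq_of_mul_mul_eq_mul_mul <| by simpa only [map_mul] using congrArg Abelianization.of braid

theorem a_pow_twelve : a ^ 12 = 1 := by
  have h : (a * b) ^ 6 = 1 := by
    simpa only [map_mul, map_pow, map_one] using congrArg Abelianization.of mul_pow_six
  rwa [← a_eq_b, ← pow_two, ← pow_mul] at h

theorem zpowers_a_eq_top : Subgroup.zpowers a = ⊤ :=
  PresentedGroup.abelianization_eq_top_of_of_mem _ fun i => by
    fin_cases i
    · exact Subgroup.mem_zpowers a
    · exact a_eq_b ▸ Subgroup.mem_zpowers a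

noncomputable def exponentSum : Abelianization T →* Multiplicative (ZMod 12) :=
  Abelianization.lift <| PresentedGroup.toGroup (f := fun _ => Multiplicative.ofAdd 1) <| by
    rintro r (rfl | rfl) <;> decide

theorem exponentSum_a : exponentSum a = Multiplicative.ofAdd 1 := by
  simp [exponentSum, PresentedGroup.toGroup.of]

theorem orderOf_a : orderOf a = 12 := by
  refine Nat.dvd_antisymm (orderOf_dvd_of_pow_eq_one a_pow_twelve) ?_
  simpa [exponentSum_a] using orderOf_map_dvd exponentSum a

theorem card_abelianization : Nat.card (Abelianization T) = 12 := by
  rw [← orderOf_a, orderOf_eq_card_of_zpowers_eq_top zpowers_a_eq_top]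

end TwistN3

/-- The group `T = ⟨a, b | aba = bab, (ab)⁶ = 1⟩` has abelianization `ℤ/12`,
generated by the image of `a`. -/
theorem stmt3 :
    Nonempty (Abelianization (PresentedGroup twistRels3) ≃*
        Multiplicative (ZMod 12)) ∧
      Subgroup.zpowers
        (Abelianization.of (PresentedGroup.of (rels := twistRels3) 0)) = ⊤ := by
  have generates := (Subgroup.eq_top_iff' _).mp TwistN3.zpowers_a_eq_top
  exact ⟨⟨(zmodMulEquivOfGenerator generates TwistN3.card_abelianization).symm⟩,
    TwistN3.zpowers_a_eq_top⟩
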